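/- Let γ, ς ∈ ℝ with ς ≤ γ, let δ > 0, ε > 0, and let χ ≥ 1 be an integer. For 0 ≤ s ≤ χ, suppose η_s = x^{I_s}·α_s and h_s = x^{I_s}·H_s, where I_s ∈ ℤ_{≥0}^r satisfies ν(x^{I_s}) = ς − sδ, each α_s is a 0-final dominant logarithmic 1-form over R = k[[x,y]], each H_s ∈ R satisfies ν_A(H_s) ≥ ε, and H_0 = 0. Assume ν_A(Δ_s) ≥ 2γ for 1 ≤ s ≤ χ, where Δ_s = Σ_{i+j=s} (j·η_j ∧ η_i + h_i·dη_j + η_i ∧ dh_j). Then for each 1 ≤ s ≤ χ there exist a unit U_s ∈ R and a logarithmic 1-form α̃_s with ν_A(α̃_s) ≥ min{ε, δ} such that α_s = U_s·α_0 + α̃_s. -/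

import Mathlib

/-!
The wedge `α_s ∧ α_0` has explicit value at least `ρ = min ε δ`, by strong induction on `s`.
Since `η_s = x^{I_s} α_s`, the term `s·η_s ∧ η_0` of `Δ_s` has value `2ς - sδ + ν(α_s ∧ α_0)`.
Every other term of `Δ_s` has value at least `2ς - sδ + ρ`: the terms involving `h` gain `ε`, and
by induction `α_j` and `α_{s-j}` are both proportional to `α_0` up to value `ρ`, so their wedge
has value at least `ρ`. As `ν(Δ_s) ≥ 2γ ≥ 2ς - sδ + ρ`, the leading wedge has value at least
`ρ` as well. Finally `α_0` has a unit coefficient `α_0(i₀)`, so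
`α_s = (α_s(i₀)/α_0(i₀))·α_0 + α_0(i₀)⁻¹·(α_s ∧ α_0)(·, i₀)`, and the factor is a unit because
`α_s` also has a unit coefficient while the remainder has no constant term.
-/

noncomputable section
open MvPowerSeries Classical

section Core

variable {k : Type} [Field k] {σ : Type}

/-- Weighted value of an exponent. -/
def wtG (W : σ → ℝ) (e : σ →₀ ℕ) : ℝ := e.sum fun i m => (m : ℝ) * W i

/-- Explicit value of a formal power series. -/
def nuG (W : σ → ℝ) (f : MvPowerSeries σ k) : EReal :=
  sInf {v : EReal | ∃ e : σ →₀ ℕ, MvPowerSeries.coeff (R := k) e f ≠ 0 ∧ v = ((wtG W e : ℝ) : EReal)}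

/-- Derivative operators: `x·∂/∂x` for logarithmic variables, `∂/∂y` for plain ones. -/
def DopG (isLog : σ → Bool) (b : σ) (f : MvPowerSeries σ k) : MvPowerSeries σ k :=
  fun e => if isLog b then (e b : k) * MvPowerSeries.coeff (R := k) e f
    else ((e b : k) + 1) * MvPowerSeries.coeff (R := k) (e + Finsupp.single b 1) f

/-- The differential of a function as a logarithmic 1-form. -/
def dFnG (isLog : σ → Bool) (f : MvPowerSeries σ k) : σ → MvPowerSeries σ k :=
  fun b => DopG isLog b f

/-- Explicit value of a logarithmic 1-form. -/
def nu1G (W : σ → ℝ) (ω : σ → MvPowerSeries σ k) : EReal := ⨅ b, nuG W (ω b)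

/-- Wedge of two 1-forms, as an alternating 2-tensor. -/
def w2G (α β : σ → MvPowerSeries σ k) : σ → σ → MvPowerSeries σ k :=
  fun a b => α a * β b - α b * β a

/-- Exterior derivative of a 1-form, as an alternating 2-tensor. -/
def dF1G (isLog : σ → Bool) (ω : σ → MvPowerSeries σ k) : σ → σ → MvPowerSeries σ k :=
  fun a b => DopG isLog a (ω b) - DopG isLog b (ω a)

/-- Explicit value of a 2-form. -/
def nu2G (W : σ → ℝ) (Ω : σ → σ → MvPowerSeries σ k) : EReal := ⨅ a, ⨅ b, nuG W (Ω a b)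

/-- Wedge of a 1-form with a 2-form, as an alternating 3-tensor. -/
def w12G (θ : σ → MvPowerSeries σ k) (Ω : σ → σ → MvPowerSeries σ k) :
    σ → σ → σ → MvPowerSeries σ k :=
  fun a b c => θ a * Ω b c - θ b * Ω a c + θ c * Ω a b

/-- Explicit value of a 3-form. -/
def nu3G (W : σ → ℝ) (T : σ → σ → σ → MvPowerSeries σ k) : EReal :=
  ⨅ a, ⨅ b, ⨅ c, nuG W (T a b c)

/-- `f` is dominant at its own explicit value: the value is realized by a monomial
purely in the distinguished (`isX`) variables. -/
def DomAtG (W : σ → ℝ) (isX : σ → Prop) (f : MvPowerSeries σ k) : Prop :=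
  ∃ e : σ →₀ ℕ, (∀ i, ¬ isX i → e i = 0) ∧ MvPowerSeries.coeff (R := k) e f ≠ 0 ∧
    ((wtG W e : ℝ) : EReal) = nuG W f

/-- `f` is `γ`-final dominant. -/
def FinalDomFnG (W : σ → ℝ) (isX : σ → Prop) (γ : ℝ) (f : MvPowerSeries σ k) : Prop :=
  nuG W f ≤ (γ : EReal) ∧ DomAtG W isX f

/-- A 1-form is dominant at its own explicit value: realized by a `dx_i/x_i`-coefficient. -/
def Dom1AtG (W : σ → ℝ) (isX : σ → Prop) (ω : σ → MvPowerSeries σ k) : Prop :=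
  ∃ i, isX i ∧ nuG W (ω i) = nu1G W ω ∧ DomAtG W isX (ω i)

/-- A 1-form is `γ`-final dominant. -/
def FinalDom1G (W : σ → ℝ) (isX : σ → Prop) (γ : ℝ) (ω : σ → MvPowerSeries σ k) : Prop :=
  nu1G W ω ≤ (γ : EReal) ∧ Dom1AtG W isX ω

end Core

abbrev Idx (r n : ℕ) := Sum (Fin r) (Fin n)

/-- The constant logarithmic 1-form `Σᵢ μᵢ · dxᵢ/xᵢ`. -/
def cFormM {k : Type} [Field k] {r n : ℕ} (μ : Fin r → k) :
    Idx r n → MvPowerSeries (Idx r n) k :=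
  fun b => match b with
  | Sum.inl i => MvPowerSeries.C (σ := Idx r n) (R := k) (μ i)
  | Sum.inr _ => 0

/-- `d_μ f = f·Σ μᵢ dxᵢ/xᵢ + df`. -/
def dMuFn {k : Type} [Field k] {r n : ℕ} (μ : Fin r → k) (f : MvPowerSeries (Idx r n) k) :
    Idx r n → MvPowerSeries (Idx r n) k :=
  fun b => cFormM μ b * f + DopG (fun s => s.isLeft) b f

/-- `d_μ η = (Σ μᵢ dxᵢ/xᵢ) ∧ η + dη` on 1-forms. -/
def dMu1 {k : Type} [Field k] {r n : ℕ} (μ : Fin r → k)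
    (η : Idx r n → MvPowerSeries (Idx r n) k) :
    Idx r n → Idx r n → MvPowerSeries (Idx r n) k :=
  fun a b => w2G (cFormM μ) η a b + dF1G (fun s => s.isLeft) η a b

/-- The monomial `x^m`. -/
def xpowM {k : Type} [Field k] {r n : ℕ} (m : Fin r → ℕ) : MvPowerSeries (Idx r n) k :=
  MvPowerSeries.monomial (R := k) (Finsupp.equivFunOnFinite.symm (Sum.elim m fun _ => 0)) 1

/-- The logarithmic 1-form `x^m · Σᵢ λᵢ dxᵢ/xᵢ`. -/
def midForm {k : Type} [Field k] {r n : ℕ} (m : Fin r → ℕ) (lam : Fin r → k) :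
    Idx r n → MvPowerSeries (Idx r n) k :=
  fun b => match b with
  | Sum.inl i => MvPowerSeries.C (σ := Idx r n) (R := k) (lam i) * xpowM m
  | Sum.inr _ => 0

/-- `Δ_s = Σ_{i+j=s} (j·ηⱼ ∧ ηᵢ + hᵢ·dηⱼ + ηᵢ ∧ dhⱼ)`. -/
def DeltaL {k : Type} [Field k] {r n : ℕ} (eta : ℕ → Idx r n → MvPowerSeries (Idx r n) k)
    (h : ℕ → MvPowerSeries (Idx r n) k) (s : ℕ) :
    Idx r n → Idx r n → MvPowerSeries (Idx r n) k :=
  ∑ j ∈ Finset.range (s + 1),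
    (j • w2G (eta j) (eta (s - j)) +
      (fun a b => h (s - j) * dF1G (fun t => t.isLeft) (eta j) a b) +
      w2G (eta (s - j)) (dFnG (fun t => t.isLeft) (h j)))


section Valuation

variable {k : Type} [Field k] {σ : Type} {W : σ → ℝ}

theorem le_nuG_iff {f : MvPowerSeries σ k} {c : EReal} :
    c ≤ nuG W f ↔ ∀ e, coeff e f ≠ 0 → c ≤ ((wtG W e : ℝ) : EReal) := by
  rw [nuG, le_sInf_iff]
  constructor
  · exact fun h e he => h _ ⟨e, he, rfl⟩
  · rintro h v ⟨e, he, rfl⟩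
    exact h e he

theorem wtG_add (a b : σ →₀ ℕ) : wtG W (a + b) = wtG W a + wtG W b := by
  simp only [wtG]
  rw [Finsupp.sum_add_index]
  · intro i _; simp
  · intro i _ m₁ m₂; push_cast; ring

theorem wtG_single_one (b : σ) : wtG W (Finsupp.single b 1) = W b := by
  rw [wtG, Finsupp.sum_single_index] <;> simp

theorem wtG_eq_sum [Fintype σ] (e : σ →₀ ℕ) : wtG W e = ∑ i, (e i : ℝ) * W i := by
  rw [wtG, Finsupp.sum_fintype]; intro i; simp

theorem wtG_pos {isX : σ → Prop} (hW0 : ∀ b, 0 ≤ W b) (hWX : ∀ b, isX b → 0 < W b)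
    {e : σ →₀ ℕ} (hsupp : ∀ i, ¬ isX i → e i = 0) (he : e ≠ 0) : 0 < wtG W e := by
  obtain ⟨i, hi⟩ := Finsupp.ne_iff.mp he
  have hXi : isX i := by_contra fun h => hi (hsupp i h)
  exact Finset.sum_pos' (fun j _ => mul_nonneg (Nat.cast_nonneg _) (hW0 j))
    ⟨i, Finsupp.mem_support_iff.mpr hi,
      mul_pos (Nat.cast_pos.mpr (Nat.pos_of_ne_zero hi)) (hWX i hXi)⟩

theorem nuG_nonneg (hW0 : ∀ b, 0 ≤ W b) (f : MvPowerSeries σ k) : ((0 : ℝ) : EReal) ≤ nuG W f :=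
  le_nuG_iff.mpr fun _ _ =>
    EReal.coe_le_coe_iff.mpr (Finset.sum_nonneg fun i _ => mul_nonneg (by positivity) (hW0 i))

theorem le_nuG_zero {c : EReal} : c ≤ nuG W (0 : MvPowerSeries σ k) :=
  le_nuG_iff.mpr fun _ he => absurd (map_zero _) he

theorem le_nuG_add {f g : MvPowerSeries σ k} {c : EReal} (hf : c ≤ nuG W f) (hg : c ≤ nuG W g) :
    c ≤ nuG W (f + g) := by
  rw [le_nuG_iff] at *
  intro e he
  rw [map_add] at he
  by_cases hfe : coeff e f = 0
  · exact hg e (by rwa [hfe, zero_add] at he)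
  · exact hf e hfe

theorem le_nuG_neg {f : MvPowerSeries σ k} {c : EReal} (hf : c ≤ nuG W f) : c ≤ nuG W (-f) := by
  rw [le_nuG_iff] at *
  intro e he
  exact hf e fun h => he (by rw [map_neg, h, neg_zero])

theorem le_nuG_sub {f g : MvPowerSeries σ k} {c : EReal} (hf : c ≤ nuG W f) (hg : c ≤ nuG W g) :
    c ≤ nuG W (f - g) := by
  rw [sub_eq_add_neg]
  exact le_nuG_add hf (le_nuG_neg hg)

theorem le_nuG_sum {ι : Type*} (t : Finset ι) (F : ι → MvPowerSeries σ k) {c : EReal}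
    (h : ∀ i ∈ t, c ≤ nuG W (F i)) : c ≤ nuG W (∑ i ∈ t, F i) := by
  induction t using Finset.induction_on with
  | empty => simpa using le_nuG_zero
  | insert i t hi ih =>
    rw [Finset.sum_insert hi]
    exact le_nuG_add (h i (t.mem_insert_self i)) (ih fun j hj => h j (Finset.mem_insert_of_mem hj))

theorem le_nuG_nsmul {f : MvPowerSeries σ k} {m : ℕ} {c : EReal} (h : c ≤ nuG W f) :
    c ≤ nuG W (m • f) := by
  rw [le_nuG_iff] at *
  intro e he
  exact h e fun h0 => he (by rw [map_nsmul, h0, smul_zero])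

theorem le_nuG_of_le_nuG_nsmul [CharZero k] {f : MvPowerSeries σ k} {m : ℕ} (hm : m ≠ 0)
    {c : EReal} (h : c ≤ nuG W (m • f)) : c ≤ nuG W f := by
  rw [le_nuG_iff] at *
  intro e he
  refine h e ?_
  rw [map_nsmul, nsmul_eq_mul]
  exact mul_ne_zero (Nat.cast_ne_zero.mpr hm) he

theorem le_nuG_mul {f g : MvPowerSeries σ k} {a b : ℝ}
    (hf : (a : EReal) ≤ nuG W f) (hg : (b : EReal) ≤ nuG W g) :
    ((a + b : ℝ) : EReal) ≤ nuG W (f * g) := by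
  rw [le_nuG_iff] at *
  intro e he
  rw [coeff_mul] at he
  obtain ⟨p, hp, hne⟩ := Finset.exists_ne_zero_of_sum_ne_zero he
  rw [← Finset.HasAntidiagonal.mem_antidiagonal.mp hp, wtG_add, EReal.coe_le_coe_iff]
  exact add_le_add (EReal.coe_le_coe_iff.mp (hf p.1 (left_ne_zero_of_mul hne)))
    (EReal.coe_le_coe_iff.mp (hg p.2 (right_ne_zero_of_mul hne)))

theorem le_nuG_mul_of_le_left (hW0 : ∀ b, 0 ≤ W b) {f : MvPowerSeries σ k} {c : ℝ}
    (hf : (c : EReal) ≤ nuG W f) (g : MvPowerSeries σ k) : (c : EReal) ≤ nuG W (f * g) := by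
  simpa using le_nuG_mul hf (nuG_nonneg hW0 g)

theorem le_nuG_mul_of_le_right (hW0 : ∀ b, 0 ≤ W b) (f : MvPowerSeries σ k)
    {g : MvPowerSeries σ k} {c : ℝ} (hg : (c : EReal) ≤ nuG W g) : (c : EReal) ≤ nuG W (f * g) := by
  simpa using le_nuG_mul (nuG_nonneg hW0 f) hg

theorem le_nuG_monomial (m : σ →₀ ℕ) :
    ((wtG W m : ℝ) : EReal) ≤ nuG W (monomial (R := k) m 1) := by
  rw [le_nuG_iff]
  intro e he
  rw [coeff_monomial] at he
  split at he
  · subst e; exact le_rfl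
  · exact absurd rfl he

theorem le_nuG_of_le_nuG_monomial_mul {f : MvPowerSeries σ k} {m : σ →₀ ℕ} {c : ℝ}
    (h : ((wtG W m + c : ℝ) : EReal) ≤ nuG W (monomial m 1 * f)) : (c : EReal) ≤ nuG W f := by
  rw [le_nuG_iff] at *
  intro e he
  have := h (m + e) (by rwa [coeff_add_monomial_mul, one_mul])
  rw [wtG_add, EReal.coe_le_coe_iff] at this
  exact EReal.coe_le_coe_iff.mpr (by linarith)

theorem le_nuG_DopG {isLog : σ → Bool} (hW : ∀ b, isLog b = false → W b = 0)
    {f : MvPowerSeries σ k} (b : σ) {c : EReal} (h : c ≤ nuG W f) : c ≤ nuG W (DopG isLog b f) := by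
  rw [le_nuG_iff] at *
  intro e he
  change DopG isLog b f e ≠ 0 at he
  rw [DopG] at he
  split_ifs at he with hb
  · exact h e (right_ne_zero_of_mul he)
  · have := h (e + Finsupp.single b 1) (right_ne_zero_of_mul he)
    rwa [wtG_add, wtG_single_one, hW b (by simpa using hb), add_zero] at this

theorem constantCoeff_eq_zero_of_le_nuG {f : MvPowerSeries σ k} {c : ℝ} (hc : 0 < c)
    (h : (c : EReal) ≤ nuG W f) : constantCoeff f = 0 := by
  by_contra hne
  have := le_nuG_iff.mp h 0 (by rwa [coeff_zero_eq_constantCoeff])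
  rw [show wtG W 0 = 0 from Finsupp.sum_zero_index] at this
  rw [EReal.coe_le_coe_iff] at this
  linarith

end Valuation

section Forms

variable {k : Type} [Field k] {σ : Type} {W : σ → ℝ}

theorem le_nu1G_iff {ω : σ → MvPowerSeries σ k} {c : EReal} :
    c ≤ nu1G W ω ↔ ∀ b, c ≤ nuG W (ω b) :=
  le_iInf_iff

theorem le_nu2G_iff {Ω : σ → σ → MvPowerSeries σ k} {c : EReal} :
    c ≤ nu2G W Ω ↔ ∀ a b, c ≤ nuG W (Ω a b) := by
  simp only [nu2G, le_iInf_iff]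

theorem le_nu2G_of_le {Ω : σ → σ → MvPowerSeries σ k} {a b : ℝ} (hab : b ≤ a)
    (h : (a : EReal) ≤ nu2G W Ω) : (b : EReal) ≤ nu2G W Ω :=
  (EReal.coe_le_coe_iff.mpr hab).trans h

theorem le_nu2G_add {Ω Θ : σ → σ → MvPowerSeries σ k} {c : EReal}
    (hΩ : c ≤ nu2G W Ω) (hΘ : c ≤ nu2G W Θ) : c ≤ nu2G W (Ω + Θ) := by
  rw [le_nu2G_iff] at *
  exact fun a b => le_nuG_add (hΩ a b) (hΘ a b)

theorem le_nu2G_of_le_nu2G_add_left {Ω Θ : σ → σ → MvPowerSeries σ k} {c : EReal}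
    (h : c ≤ nu2G W (Ω + Θ)) (hΩ : c ≤ nu2G W Ω) : c ≤ nu2G W Θ := by
  rw [le_nu2G_iff] at *
  intro a b
  simpa using le_nuG_sub (h a b) (hΩ a b)

theorem le_nu2G_of_le_nu2G_add_right {Ω Θ : σ → σ → MvPowerSeries σ k} {c : EReal}
    (h : c ≤ nu2G W (Ω + Θ)) (hΘ : c ≤ nu2G W Θ) : c ≤ nu2G W Ω :=
  le_nu2G_of_le_nu2G_add_left (add_comm Ω Θ ▸ h) hΘ

theorem le_nu2G_sum {ι : Type*} (t : Finset ι) (Ω : ι → σ → σ → MvPowerSeries σ k) {c : EReal}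
    (h : ∀ i ∈ t, c ≤ nu2G W (Ω i)) : c ≤ nu2G W (∑ i ∈ t, Ω i) := by
  rw [le_nu2G_iff]
  intro a b
  simp only [Finset.sum_apply]
  exact le_nuG_sum t _ fun i hi => le_nu2G_iff.mp (h i hi) a b

theorem le_nu2G_nsmul {Ω : σ → σ → MvPowerSeries σ k} {m : ℕ} {c : EReal}
    (h : c ≤ nu2G W Ω) : c ≤ nu2G W (m • Ω) := by
  rw [le_nu2G_iff] at *
  exact fun a b => le_nuG_nsmul (h a b)

theorem le_nu2G_of_le_nu2G_nsmul [CharZero k] {Ω : σ → σ → MvPowerSeries σ k} {m : ℕ}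
    (hm : m ≠ 0) {c : EReal} (h : c ≤ nu2G W (m • Ω)) : c ≤ nu2G W Ω := by
  rw [le_nu2G_iff] at *
  exact fun a b => le_nuG_of_le_nuG_nsmul hm (h a b)

theorem le_nu2G_mul {f : MvPowerSeries σ k} {Ω : σ → σ → MvPowerSeries σ k} {a b : ℝ}
    (hf : (a : EReal) ≤ nuG W f) (hΩ : (b : EReal) ≤ nu2G W Ω) :
    ((a + b : ℝ) : EReal) ≤ nu2G W (fun x y => f * Ω x y) :=
  le_nu2G_iff.mpr fun x y => le_nuG_mul hf (le_nu2G_iff.mp hΩ x y)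

theorem le_nu2G_of_le_nu2G_monomial_mul {Ω : σ → σ → MvPowerSeries σ k} {m : σ →₀ ℕ} {c : ℝ}
    (h : ((wtG W m + c : ℝ) : EReal) ≤ nu2G W (fun x y => monomial m 1 * Ω x y)) :
    (c : EReal) ≤ nu2G W Ω :=
  le_nu2G_iff.mpr fun x y => le_nuG_of_le_nuG_monomial_mul (le_nu2G_iff.mp h x y)

theorem le_nu2G_w2G {α β : σ → MvPowerSeries σ k} {a b : ℝ}
    (hα : (a : EReal) ≤ nu1G W α) (hβ : (b : EReal) ≤ nu1G W β) :
    ((a + b : ℝ) : EReal) ≤ nu2G W (w2G α β) := by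
  rw [le_nu1G_iff] at hα hβ
  exact le_nu2G_iff.mpr fun x y =>
    le_nuG_sub (le_nuG_mul (hα x) (hβ y)) (le_nuG_mul (hα y) (hβ x))

theorem le_nu2G_dF1G {isLog : σ → Bool} (hW : ∀ b, isLog b = false → W b = 0)
    {ω : σ → MvPowerSeries σ k} {c : EReal} (h : c ≤ nu1G W ω) : c ≤ nu2G W (dF1G isLog ω) := by
  rw [le_nu1G_iff] at h
  exact le_nu2G_iff.mpr fun x y =>
    le_nuG_sub (le_nuG_DopG hW x (h y)) (le_nuG_DopG hW y (h x))

theorem le_nu1G_dFnG {isLog : σ → Bool} (hW : ∀ b, isLog b = false → W b = 0)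
    {f : MvPowerSeries σ k} {c : EReal} (h : c ≤ nuG W f) : c ≤ nu1G W (dFnG isLog f) :=
  le_nu1G_iff.mpr fun b => le_nuG_DopG hW b h

theorem w2G_mul_mul (f g : MvPowerSeries σ k) (α β : σ → MvPowerSeries σ k) :
    w2G (fun b => f * α b) (fun b => g * β b) = fun x y => f * g * w2G α β x y := by
  ext x y : 2
  simp only [w2G]
  ring

end Forms

section Proportional

variable {k : Type} [Field k] {σ : Type} {W : σ → ℝ}

theorem exists_isUnit_of_finalDom1G {isX : σ → Prop} (hW0 : ∀ b, 0 ≤ W b)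
    (hWX : ∀ b, isX b → 0 < W b) {ω : σ → MvPowerSeries σ k} (h : FinalDom1G W isX 0 ω) :
    ∃ i, IsUnit (ω i) := by
  obtain ⟨hle, i, -, hval, e, hsupp, hco, hwt⟩ := h
  have he : e = 0 := by
    by_contra hne
    have hwt0 : ((wtG W e : ℝ) : EReal) ≤ ((0 : ℝ) : EReal) := (hwt.trans hval).trans_le hle
    exact (wtG_pos hW0 hWX hsupp hne).not_ge (EReal.coe_le_coe_iff.mp hwt0)
  subst he
  exact ⟨i, isUnit_iff_constantCoeff.mpr
    (isUnit_iff_ne_zero.mpr (by rwa [← coeff_zero_eq_constantCoeff_apply]))⟩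

theorem exists_eq_mul_add_of_le_nu2G_w2G (hW0 : ∀ b, 0 ≤ W b)
    {α α₀ : σ → MvPowerSeries σ k} {i₀ : σ} (hu : IsUnit (α₀ i₀)) {ρ : ℝ}
    (h : (ρ : EReal) ≤ nu2G W (w2G α α₀)) :
    ∃ (U : MvPowerSeries σ k) (A : σ → MvPowerSeries σ k),
      (ρ : EReal) ≤ nu1G W A ∧ ∀ b, α b = U * α₀ b + A b := by
  obtain ⟨u, hu⟩ := hu
  refine ⟨α i₀ * ↑u⁻¹, fun b => ↑u⁻¹ * w2G α α₀ b i₀,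
    le_nu1G_iff.mpr fun b => le_nuG_mul_of_le_right hW0 _ (le_nu2G_iff.mp h b i₀), fun b => ?_⟩
  simp only [w2G, ← hu]
  linear_combination (-α b) * u.inv_mul

theorem le_nu2G_w2G_of_le_nu2G_w2G (hW0 : ∀ b, 0 ≤ W b)
    {α β α₀ : σ → MvPowerSeries σ k} {i₀ : σ} (hu : IsUnit (α₀ i₀)) {ρ : ℝ}
    (hα : (ρ : EReal) ≤ nu2G W (w2G α α₀)) (hβ : (ρ : EReal) ≤ nu2G W (w2G β α₀)) :
    (ρ : EReal) ≤ nu2G W (w2G α β) := by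
  obtain ⟨U, A, hA, hαA⟩ := exists_eq_mul_add_of_le_nu2G_w2G hW0 hu hα
  obtain ⟨V, B, hB, hβB⟩ := exists_eq_mul_add_of_le_nu2G_w2G hW0 hu hβ
  rw [le_nu1G_iff] at hA hB
  rw [le_nu2G_iff]
  intro a b
  have hexp : w2G α β a b = U * (α₀ a * B b - α₀ b * B a) + V * (A a * α₀ b - A b * α₀ a)
      + (A a * B b - A b * B a) := by
    simp only [w2G]
    rw [hαA a, hαA b, hβB a, hβB b]
    ring
  rw [hexp]
  refine le_nuG_add (le_nuG_add ?_ ?_) ?_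
  · exact le_nuG_mul_of_le_right hW0 _ (le_nuG_sub (le_nuG_mul_of_le_right hW0 _ (hB b))
      (le_nuG_mul_of_le_right hW0 _ (hB a)))
  · exact le_nuG_mul_of_le_right hW0 _ (le_nuG_sub (le_nuG_mul_of_le_left hW0 (hA a) _)
      (le_nuG_mul_of_le_left hW0 (hA b) _))
  · exact le_nuG_sub (le_nuG_mul_of_le_right hW0 _ (hB b)) (le_nuG_mul_of_le_right hW0 _ (hB a))

theorem isUnit_of_eq_mul_add {U : MvPowerSeries σ k} {α α₀ A : σ → MvPowerSeries σ k} {ρ : ℝ}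
    (hρ : 0 < ρ) (hA : (ρ : EReal) ≤ nu1G W A) (hdec : ∀ b, α b = U * α₀ b + A b) {i : σ}
    (hi : IsUnit (α i)) : IsUnit U := by
  have hA0 : constantCoeff (A i) = 0 := constantCoeff_eq_zero_of_le_nuG hρ (le_nu1G_iff.mp hA i)
  rw [isUnit_iff_constantCoeff] at hi ⊢
  rw [hdec i, map_add, map_mul, hA0, add_zero] at hi
  exact isUnit_of_mul_isUnit_left hi

end Proportional

section Levels

variable {k : Type} [Field k] {r n : ℕ} {W : Idx r n → ℝ}

theorem wtG_xpowM_exponent (m : Fin r → ℕ) :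
    wtG W (Finsupp.equivFunOnFinite.symm (Sum.elim m fun _ : Fin n => 0))
      = ∑ i, (m i : ℝ) * W (Sum.inl i) := by
  rw [wtG_eq_sum, Fintype.sum_sum_type]
  simp

theorem le_nuG_xpowM (m : Fin r → ℕ) :
    ((∑ i, (m i : ℝ) * W (Sum.inl i) : ℝ) : EReal) ≤ nuG W (xpowM (k := k) m) :=
  wtG_xpowM_exponent (W := W) m ▸ le_nuG_monomial _

theorem le_nu2G_of_le_nu2G_xpowM_mul {Ω : Idx r n → Idx r n → MvPowerSeries (Idx r n) k}
    {m : Fin r → ℕ} {a c : ℝ} (hm : ∑ i, (m i : ℝ) * W (Sum.inl i) = a)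
    (h : ((a + c : ℝ) : EReal) ≤ nu2G W (fun x y => xpowM m * Ω x y)) : (c : EReal) ≤ nu2G W Ω :=
  le_nu2G_of_le_nu2G_monomial_mul (by rwa [wtG_xpowM_exponent, hm])

theorem le_nu2G_w2G_of_le_nu2G_DeltaL [CharZero k] (hW : ∀ j, W (Sum.inr j) = 0)
    {eta : ℕ → Idx r n → MvPowerSeries (Idx r n) k} {h : ℕ → MvPowerSeries (Idx r n) k}
    {s : ℕ} (hs : s ≠ 0) {v : ℕ → ℝ} {ε c : ℝ}
    (heta : ∀ j ≤ s, (v j : EReal) ≤ nu1G W (eta j))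
    (hh : ∀ j ≤ s, ((v j + ε : ℝ) : EReal) ≤ nuG W (h j))
    (hv : ∀ j ≤ s, c ≤ v j + v (s - j) + ε)
    (hmid : ∀ j, 1 ≤ j → j < s → (c : EReal) ≤ nu2G W (w2G (eta j) (eta (s - j))))
    (hΔ : (c : EReal) ≤ nu2G W (DeltaL eta h s)) :
    (c : EReal) ≤ nu2G W (w2G (eta s) (eta 0)) := by
  have hWy : ∀ b : Idx r n, b.isLeft = false → W b = 0 := by
    rintro (i | j) hb
    · simp at hb
    · exact hW j
  have hdη : ∀ j ≤ s, (c : EReal) ≤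
      nu2G W (fun a b => h (s - j) * dF1G (fun t => t.isLeft) (eta j) a b) := fun j hj =>
    le_nu2G_of_le (by linarith [hv j hj])
      (le_nu2G_mul (hh _ (Nat.sub_le s j)) (le_nu2G_dF1G hWy (heta j hj)))
  have hdh : ∀ j ≤ s, (c : EReal) ≤ nu2G W (w2G (eta (s - j)) (dFnG (fun t => t.isLeft) (h j))) :=
    fun j hj => le_nu2G_of_le (by linarith [hv j hj])
      (le_nu2G_w2G (heta _ (Nat.sub_le s j)) (le_nu1G_dFnG hWy (hh j hj)))
  have hwedge : ∀ j < s, (c : EReal) ≤ nu2G W (j • w2G (eta j) (eta (s - j))) := by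
    intro j hjs
    rcases Nat.eq_zero_or_pos j with rfl | hj
    · rw [zero_smul]
      exact le_nu2G_iff.mpr fun _ _ => le_nuG_zero
    · exact le_nu2G_nsmul (hmid j hj hjs)
  have hlead : (c : EReal) ≤ nu2G W (s • w2G (eta s) (eta (s - s))) := by
    rw [DeltaL, Finset.sum_range_succ] at hΔ
    refine le_nu2G_of_le_nu2G_add_right (le_nu2G_of_le_nu2G_add_right
      (le_nu2G_of_le_nu2G_add_left hΔ (le_nu2G_sum _ _ fun j hj => ?_)) (hdh s le_rfl))
      (hdη s le_rfl)
    have hjs := Finset.mem_range.mp hj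
    exact le_nu2G_add (le_nu2G_add (hwedge j hjs) (hdη j hjs.le)) (hdh j hjs.le)
  rw [Nat.sub_self] at hlead
  exact le_nu2G_of_le_nu2G_nsmul hs hlead

theorem le_nu2G_w2G_of_levels [CharZero k] (hW0 : ∀ b, 0 ≤ W b)
    (hW : ∀ j, W (Sum.inr j) = 0) {I : ℕ → Fin r → ℕ}
    {alpha eta : ℕ → Idx r n → MvPowerSeries (Idx r n) k} {H h : ℕ → MvPowerSeries (Idx r n) k}
    {v : ℕ → ℝ} {ε ρ : ℝ} (hρε : ρ ≤ ε) {i₀ : Idx r n} (hu : IsUnit (alpha 0 i₀))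
    {s : ℕ} (hs : 1 ≤ s)
    (heta : ∀ t ≤ s, eta t = fun b => xpowM (I t) * alpha t b)
    (hh : ∀ t ≤ s, h t = xpowM (I t) * H t)
    (hI : ∀ t ≤ s, ∑ i, (I t i : ℝ) * W (Sum.inl i) = v t)
    (hv : ∀ t ≤ s, v t + v (s - t) = v s + v 0)
    (hH : ∀ t ≤ s, (ε : EReal) ≤ nuG W (H t))
    (ih : ∀ t, 1 ≤ t → t < s → (ρ : EReal) ≤ nu2G W (w2G (alpha t) (alpha 0)))
    (hΔ : ((v s + v 0 + ρ : ℝ) : EReal) ≤ nu2G W (DeltaL eta h s)) :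
    (ρ : EReal) ≤ nu2G W (w2G (alpha s) (alpha 0)) := by
  have hx : ∀ t ≤ s, (v t : EReal) ≤ nuG W (xpowM (k := k) (I t)) :=
    fun t ht => hI t ht ▸ le_nuG_xpowM (I t)
  have hη : ∀ t ≤ s, (v t : EReal) ≤ nu1G W (eta t) := fun t ht => by
    rw [heta t ht]
    exact le_nu1G_iff.mpr fun b => le_nuG_mul_of_le_left hW0 (hx t ht) _
  have hhv : ∀ t ≤ s, ((v t + ε : ℝ) : EReal) ≤ nuG W (h t) :=
    fun t ht => hh t ht ▸ le_nuG_mul (hx t ht) (hH t ht)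
  have hmid : ∀ j, 1 ≤ j → j < s →
      ((v s + v 0 + ρ : ℝ) : EReal) ≤ nu2G W (w2G (eta j) (eta (s - j))) := by
    intro j hj hjs
    rw [heta j hjs.le, heta (s - j) (Nat.sub_le s j), w2G_mul_mul, ← hv j hjs.le]
    exact le_nu2G_mul (le_nuG_mul (hx j hjs.le) (hx _ (Nat.sub_le s j)))
      (le_nu2G_w2G_of_le_nu2G_w2G hW0 hu (ih j hj hjs) (ih (s - j) (by omega) (by omega)))
  have hlead := le_nu2G_w2G_of_le_nu2G_DeltaL hW (by omega) hη hhv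
    (fun t ht => by linarith [hv t ht]) hmid hΔ
  rw [heta s le_rfl, heta 0 (Nat.zero_le s), w2G_mul_mul] at hlead
  simp only [mul_assoc] at hlead
  exact le_nu2G_of_le_nu2G_xpowM_mul (hI 0 (Nat.zero_le s))
    (le_nu2G_of_le_nu2G_xpowM_mul (hI s le_rfl) (by rwa [← add_assoc]))

end Levels

theorem statement14_general {k : Type} [Field k] [CharZero k] {r n : ℕ}
    (w : Fin r → ℝ) (hw : ∀ i, 0 < w i)
    (γ ς δ ε : ℝ) (hςγ : ς ≤ γ) (hδ : 0 < δ) (hε : 0 < ε)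
    (χ : ℕ)
    (I : ℕ → Fin r → ℕ)
    (alpha : ℕ → Idx r n → MvPowerSeries (Idx r n) k)
    (H : ℕ → MvPowerSeries (Idx r n) k)
    (eta : ℕ → Idx r n → MvPowerSeries (Idx r n) k)
    (h : ℕ → MvPowerSeries (Idx r n) k)
    (heta : ∀ s ≤ χ, ∀ b, eta s b = xpowM (I s) * alpha s b)
    (hh : ∀ s ≤ χ, h s = xpowM (I s) * H s)
    (hI : ∀ s ≤ χ, (∑ i, (I s i : ℝ) * w i) = ς - s * δ)
    (halpha : ∀ s ≤ χ,
      FinalDom1G (Sum.elim w fun _ => (0:ℝ)) (fun t => t.isLeft = true) 0 (alpha s))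
    (hHval : ∀ s ≤ χ, (ε : EReal) ≤ nuG (Sum.elim w fun _ => (0:ℝ)) (H s))
    (hΔ : ∀ s, 1 ≤ s → s ≤ χ →
      ((2 * γ : ℝ) : EReal) ≤ nu2G (Sum.elim w fun _ => (0:ℝ)) (DeltaL eta h s)) :
    ∀ s, 1 ≤ s → s ≤ χ →
      ∃ (U : MvPowerSeries (Idx r n) k) (alphat : Idx r n → MvPowerSeries (Idx r n) k),
        IsUnit U ∧
        ((min ε δ : ℝ) : EReal) ≤ nu1G (Sum.elim w fun _ => (0:ℝ)) alphat ∧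
        ∀ b, alpha s b = U * alpha 0 b + alphat b := by
  have hW0 : ∀ b : Idx r n, 0 ≤ Sum.elim w (fun _ => (0:ℝ)) b := by
    rintro (i | j)
    exacts [(hw i).le, le_rfl]
  have hWX : ∀ b : Idx r n, b.isLeft = true → 0 < Sum.elim w (fun _ => (0:ℝ)) b := by
    rintro (i | j) hb
    exacts [hw i, by simp at hb]
  obtain ⟨i₀, hu₀⟩ := exists_isUnit_of_finalDom1G hW0 hWX (halpha 0 χ.zero_le)
  have hwedge : ∀ s, 1 ≤ s → s ≤ χ →
      ((min ε δ : ℝ) : EReal) ≤ nu2G (Sum.elim w fun _ => (0:ℝ)) (w2G (alpha s) (alpha 0)) := by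
    intro s
    induction s using Nat.strong_induction_on with
    | _ s ih =>
      intro hs hsχ
      have hsδ : δ ≤ s * δ := le_mul_of_one_le_left hδ.le (by exact_mod_cast hs)
      refine le_nu2G_w2G_of_levels (v := fun t => ς - t * δ) hW0 (fun _ => rfl)
        (min_le_left ε δ) hu₀ hs (fun t ht => funext (heta t (ht.trans hsχ)))
        (fun t ht => hh t (ht.trans hsχ)) (fun t ht => hI t (ht.trans hsχ))
        (fun t ht => by push_cast [Nat.cast_sub ht]; ring) (fun t ht => hHval t (ht.trans hsχ))
        (fun t ht hts => ih t hts ht (hts.le.trans hsχ))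
        (le_nu2G_of_le ?_ (hΔ s hs hsχ))
      simp only [Nat.cast_zero, zero_mul, sub_zero]
      linarith [min_le_right ε δ]
  intro s hs hsχ
  obtain ⟨U, A, hA, hdec⟩ := exists_eq_mul_add_of_le_nu2G_w2G hW0 hu₀ (hwedge s hs hsχ)
  obtain ⟨i, hi⟩ := exists_isUnit_of_finalDom1G hW0 hWX (halpha s hsχ)
  exact ⟨U, A, isUnit_of_eq_mul_add (lt_min hε hδ) hA hdec hi, hA, hdec⟩

/-- truncated proportionality of the levels `α_s` to `α_0`. -/
theorem statement14 {k : Type} [Field k] [CharZero k] {r n : ℕ} (hr : 0 < r)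
    (w : Fin r → ℝ) (hw : ∀ i, 0 < w i) (hind : LinearIndependent ℚ w)
    (γ ς δ ε : ℝ) (hςγ : ς ≤ γ) (hδ : 0 < δ) (hε : 0 < ε)
    (χ : ℕ) (hχ : 1 ≤ χ)
    (I : ℕ → Fin r → ℕ)
    (alpha : ℕ → Idx r n → MvPowerSeries (Idx r n) k)
    (H : ℕ → MvPowerSeries (Idx r n) k)
    (eta : ℕ → Idx r n → MvPowerSeries (Idx r n) k)
    (h : ℕ → MvPowerSeries (Idx r n) k)
    (heta : ∀ s ≤ χ, ∀ b, eta s b = xpowM (I s) * alpha s b)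
    (hh : ∀ s ≤ χ, h s = xpowM (I s) * H s)
    (hI : ∀ s ≤ χ, (∑ i, (I s i : ℝ) * w i) = ς - s * δ)
    (halpha : ∀ s ≤ χ,
      FinalDom1G (Sum.elim w fun _ => (0:ℝ)) (fun t => t.isLeft = true) 0 (alpha s))
    (hHval : ∀ s ≤ χ, (ε : EReal) ≤ nuG (Sum.elim w fun _ => (0:ℝ)) (H s))
    (hH0 : H 0 = 0)
    (hΔ : ∀ s, 1 ≤ s → s ≤ χ →
      ((2 * γ : ℝ) : EReal) ≤ nu2G (Sum.elim w fun _ => (0:ℝ)) (DeltaL eta h s)) :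
    ∀ s, 1 ≤ s → s ≤ χ →
      ∃ (U : MvPowerSeries (Idx r n) k) (alphat : Idx r n → MvPowerSeries (Idx r n) k),
        IsUnit U ∧
        ((min ε δ : ℝ) : EReal) ≤ nu1G (Sum.elim w fun _ => (0:ℝ)) alphat ∧
        ∀ b, alpha s b = U * alpha 0 b + alphat b :=
  statement14_general w hw γ ς δ ε hςγ hδ hε χ I alpha H eta h heta hh hI halpha hHval hΔ
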